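/- arXiv:2509.04364 — 2 statements merged into one kernel-verified Lean document; each statement's English description precedes it below -/
import Mathlib

section
/- Let I be an ideal of S such that in_{x_n}(I) = C(x_n,I) ∩ (N(x_n,I) + (x_n)) is a nondegenerate geometric vertex decomposition, and suppose N(x_n,I) has no embedded primes. Let u ∈ C(x_n,I) and s ∈ S have no term divisible by x_n and suppose v := x_n·u + s ∈ I. Then for every i ∈ I there exist c ∈ C(x_n,I) and m ∈ N(x_n,I) such that i·u = v·c + m. -/
open MvPolynomial

/-- The trace map on a polynomial ring: on a monomial `m`, it returns
`(m·x_1⋯x_n)^{1/p}/(x_1⋯x_n)` if `m·x_1⋯x_n` is a `p`-th power of a monomial,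
and `0` otherwise, extended `κ`-linearly. -/
noncomputable def Tr (κ : Type*) [CommSemiring κ] {σ : Type*} [Fintype σ] [DecidableEq σ]
    (p : ℕ) (f : MvPolynomial σ κ) : MvPolynomial σ κ :=
  ∑ b ∈ f.support,
    if ∀ i : σ, (b i + 1) % p = 0 then
      MvPolynomial.monomial (Finsupp.equivFunOnFinite.symm fun i => (b i + 1) / p - 1) (f.coeff b)
    else 0

/-- A Frobenius splitting: an additive map `φ` with `φ(a^p·b) = a·φ(b)` and `φ(1) = 1`. -/
def IsFrobSplitting {R : Type*} [CommSemiring R] (p : ℕ) (φ : R → R) : Prop :=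
  (∀ a b : R, φ (a + b) = φ a + φ b) ∧ (∀ a b : R, φ (a ^ p * b) = a * φ b) ∧ φ 1 = 1

/-- `φ` compatibly splits the ideal `I` if `φ(I) ⊆ I`. -/
def CompatiblySplits {R : Type*} [CommSemiring R] (φ : R → R) (I : Ideal R) : Prop :=
  ∀ a ∈ I, φ a ∈ I

/-- `f` has no term divisible by the variable `y`. -/
def NoVar {κ : Type*} [CommSemiring κ] {σ : Type*} (y : σ) (f : MvPolynomial σ κ) : Prop :=
  ∀ b ∈ f.support, (b : σ →₀ ℕ) y = 0

/-- `in_y(f)`: the sum of the terms of `f` of highest degree in the variable `y`. -/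
noncomputable def inY {κ : Type*} [CommSemiring κ] {σ : Type*} [DecidableEq σ]
    (y : σ) (f : MvPolynomial σ κ) : MvPolynomial σ κ :=
  ∑ b ∈ f.support,
    if (b : σ →₀ ℕ) y = f.degreeOf y then MvPolynomial.monomial b (f.coeff b) else 0

/-- `in_y(I)`, the ideal generated by `in_y(f)` for `f ∈ I`. -/
noncomputable def inYIdeal {κ : Type*} [CommSemiring κ] {σ : Type*} [DecidableEq σ]
    (y : σ) (I : Ideal (MvPolynomial σ κ)) : Ideal (MvPolynomial σ κ) :=
  Ideal.span { g | ∃ f ∈ I, g = inY y f }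

/-- The saturation `J : x^∞`. -/
def satPow {R : Type*} [CommRing R] (J : Ideal R) (x : R) : Ideal R where
  carrier := { f | ∃ k : ℕ, x ^ k * f ∈ J }
  zero_mem' := ⟨0, by simp⟩
  add_mem' := by
    rintro a b ⟨k, hk⟩ ⟨l, hl⟩
    refine ⟨k + l, ?_⟩
    have h := J.add_mem (J.mul_mem_left (x ^ l) hk) (J.mul_mem_left (x ^ k) hl)
    have e : x ^ (k + l) * (a + b) = x ^ l * (x ^ k * a) + x ^ k * (x ^ l * b) := by ring
    rwa [e]
  smul_mem' := by
    rintro c a ⟨k, hk⟩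
    refine ⟨k, ?_⟩
    have h := J.mul_mem_left c hk
    have e : x ^ k * (c • a) = c * (x ^ k * a) := by
      simp [smul_eq_mul]; ring
    rwa [e]

/-- `C(y,I) = in_y(I) : y^∞`. -/
noncomputable def Cyd {κ : Type*} [Field κ] {σ : Type*} [DecidableEq σ]
    (y : σ) (I : Ideal (MvPolynomial σ κ)) : Ideal (MvPolynomial σ κ) :=
  satPow (inYIdeal y I) (X y)

/-- `N(y,I)`, the ideal generated by the elements of `I` having no term divisible by `y`. -/
noncomputable def Nyd {κ : Type*} [Field κ] {σ : Type*} (y : σ) (I : Ideal (MvPolynomial σ κ)) :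
    Ideal (MvPolynomial σ κ) :=
  Ideal.span { f | f ∈ I ∧ NoVar y f }

/-- `I` admits a geometric vertex decomposition at `y`. -/
def IsGVD {κ : Type*} [Field κ] {σ : Type*} [DecidableEq σ]
    (y : σ) (I : Ideal (MvPolynomial σ κ)) : Prop :=
  inYIdeal y I = Cyd y I ⊓ (Nyd y I + Ideal.span {X y}) ∧
    ((Cyd y I).radical = (Nyd y I).radical ∨
      ∀ P ∈ (Cyd y I).minimalPrimes, P ∉ (Nyd y I).minimalPrimes)

/-- A nondegenerate geometric vertex decomposition. -/
def IsNondegGVD {κ : Type*} [Field κ] {σ : Type*} [DecidableEq σ]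
    (y : σ) (I : Ideal (MvPolynomial σ κ)) : Prop :=
  IsGVD y I ∧ Cyd y I ≠ ⊤ ∧ (Cyd y I).radical ≠ (Nyd y I).radical

/-- A degenerate geometric vertex decomposition. -/
def IsDegenGVD {κ : Type*} [Field κ] {σ : Type*} [DecidableEq σ]
    (y : σ) (I : Ideal (MvPolynomial σ κ)) : Prop :=
  IsGVD y I ∧ (Cyd y I = ⊤ ∨ (Cyd y I).radical = (Nyd y I).radical)

/-- The ideal `N` has no embedded primes: every associated prime is minimal. -/
def NoEmbeddedPrimes {R : Type*} [CommRing R] (N : Ideal R) : Prop :=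
  associatedPrimes R (R ⧸ N) ⊆ N.minimalPrimes

/-- `q` is a nonzerodivisor modulo `N`. -/
def NZDMod {R : Type*} [CommRing R] (N : Ideal R) (q : R) : Prop :=
  ∀ a : R, q * a ∈ N → a ∈ N

/-
Induct on the `x_n`-degree of `i`. If it is `0`, then `i ∈ N` and `i·u = v·0 + i·u`. Otherwise
write `in(i) = x_n^(d+1)·q`; then `q ∈ C`, so `x_n·q ∈ C ∩ (N + (x_n)) = in(I)`. Every nonzero
`x_n`-homogeneous component of an element of `in(I)` is the initial form of an element of `I`, so
`f = x_n·q + r ∈ I` with `r` free of `x_n`. Now `i - x_n^d·f ∈ I` has smaller degree, and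
`f·u - v·q = r·u - s·q` lies in `I` and is free of `x_n`, hence lies in `N`.
-/

namespace MvPolynomial

section Weighted

variable {R σ : Type*} [CommSemiring R] {w : σ → ℕ} {a b : MvPolynomial σ R} {i n : ℕ}

theorem weightedHomogeneousComponent_mul_of_le (ha : IsWeightedHomogeneous w a i) (h : i ≤ n) :
    weightedHomogeneousComponent w n (a * b) = a * weightedHomogeneousComponent w (n - i) b := by
  let := weightedGradedAlgebra R w
  rw [← weightedDecomposition.decompose'_apply, ← weightedDecomposition.decompose'_apply]
  exact DirectSum.coe_decompose_mul_of_left_mem_of_le _ ha h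

theorem weightedHomogeneousComponent_mul_of_lt (ha : IsWeightedHomogeneous w a i) (h : n < i) :
    weightedHomogeneousComponent w n (a * b) = 0 := by
  let := weightedGradedAlgebra R w
  rw [← weightedDecomposition.decompose'_apply]
  exact DirectSum.coe_decompose_mul_of_left_mem_of_not_le _ ha h.not_ge

end Weighted

variable {R σ : Type*} {y : σ}

theorem noVar_iff_degreeOf_eq_zero [CommSemiring R] {f : MvPolynomial σ R} :
    NoVar y f ↔ degreeOf y f = 0 := by
  rw [← Nat.le_zero, degreeOf_le_iff]
  simp only [NoVar, Nat.le_zero]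

theorem _root_.NoVar.mul [CommSemiring R] {f g : MvPolynomial σ R} (hf : NoVar y f)
    (hg : NoVar y g) : NoVar y (f * g) := by
  rw [noVar_iff_degreeOf_eq_zero] at *
  exact Nat.le_zero.1 ((degreeOf_mul_le y f g).trans_eq (by rw [hf, hg]))

theorem _root_.NoVar.sub [CommRing R] {f g : MvPolynomial σ R} (hf : NoVar y f)
    (hg : NoVar y g) : NoVar y (f - g) := by
  rw [noVar_iff_degreeOf_eq_zero] at *
  exact Nat.le_zero.1 ((degreeOf_sub_le y f g).trans_eq (by rw [hf, hg, max_self]))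

theorem mem_Nyd_of_noVar {κ : Type*} [Field κ] {I : Ideal (MvPolynomial σ κ)}
    {f : MvPolynomial σ κ} (hf : f ∈ I) (hfy : NoVar y f) : f ∈ Nyd y I :=
  Ideal.subset_span ⟨hf, hfy⟩

variable [DecidableEq σ]

theorem weight_single_one_apply (y : σ) (b : σ →₀ ℕ) :
    Finsupp.weight (Pi.single y 1) b = b y := by
  simp [Finsupp.weight_apply, Pi.single_apply, eq_comm]

section CommSemiring

variable [CommSemiring R] {f g h φ : MvPolynomial σ R} {t : ℕ}

theorem _root_.NoVar.isWeightedHomogeneous (hf : NoVar y f) :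
    IsWeightedHomogeneous (Pi.single y 1) f 0 := fun b hb => by
  rw [weight_single_one_apply]
  exact hf b (mem_support_iff.2 hb)

theorem inY_eq_weightedHomogeneousComponent (y : σ) (f : MvPolynomial σ R) :
    inY y f = weightedHomogeneousComponent (Pi.single y 1) (degreeOf y f) f := by
  ext b
  rw [inY, coeff_sum, coeff_weightedHomogeneousComponent, weight_single_one_apply]
  simp_rw [apply_ite (coeff b), coeff_monomial, coeff_zero]
  rw [Finset.sum_eq_single b]
  · simp
  · intro b' _ hb'
    simp [hb']
  · intro hb
    simp [notMem_support_iff.1 hb]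

theorem isWeightedHomogeneous_inY (y : σ) (f : MvPolynomial σ R) :
    IsWeightedHomogeneous (Pi.single y 1) (inY y f) (degreeOf y f) := by
  rw [inY_eq_weightedHomogeneousComponent]
  exact weightedHomogeneousComponent_isWeightedHomogeneous _ _

theorem IsWeightedHomogeneous.exists_noVar_eq_X_pow_mul
    (hφ : IsWeightedHomogeneous (Pi.single y 1) φ t) : ∃ q, NoVar y q ∧ φ = X y ^ t * q := by
  refine ⟨φ.divMonomial (Finsupp.single y t), fun b hb => ?_, ?_⟩
  · rw [mem_support_iff, coeff_divMonomial] at hb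
    have := hφ hb
    simp only [weight_single_one_apply, Finsupp.add_apply, Finsupp.single_eq_same] at this
    omega
  · ext m
    rw [X_pow_eq_monomial, coeff_monomial_mul', coeff_divMonomial]
    split_ifs with h
    · rw [one_mul, add_tsub_cancel_of_le h]
    · refine hφ.coeff_eq_zero _ fun e => h (Finsupp.single_le_iff.2 ?_)
      rw [weight_single_one_apply] at e
      exact e.ge

variable {I : Ideal (MvPolynomial σ R)}

-- An `f` as here has `inY y f` equal to the `t`-component of `h` whenever that component is nonzero.
def ComponentsLift (y : σ) (I : Ideal (MvPolynomial σ R)) (h : MvPolynomial σ R) : Prop :=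
  ∀ t, ∃ f ∈ I, degreeOf y f ≤ t ∧
    weightedHomogeneousComponent (Pi.single y 1) t f =
      weightedHomogeneousComponent (Pi.single y 1) t h

theorem componentsLift_zero : ComponentsLift y I 0 :=
  fun _ => ⟨0, I.zero_mem, by simp, rfl⟩

theorem ComponentsLift.add (hg : ComponentsLift y I g) (hh : ComponentsLift y I h) :
    ComponentsLift y I (g + h) := by
  intro t
  obtain ⟨f₁, hf₁, hd₁, hc₁⟩ := hg t
  obtain ⟨f₂, hf₂, hd₂, hc₂⟩ := hh t
  exact ⟨f₁ + f₂, I.add_mem hf₁ hf₂, (degreeOf_add_le y f₁ f₂).trans (max_le hd₁ hd₂),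
    by rw [map_add, map_add, hc₁, hc₂]⟩

theorem ComponentsLift.monomial_mul (hh : ComponentsLift y I h) (b : σ →₀ ℕ) (c : R) :
    ComponentsLift y I (monomial b c * h) := by
  have hb : IsWeightedHomogeneous (Pi.single y 1) (monomial b c) (b y) := by
    rw [← weight_single_one_apply]
    exact isWeightedHomogeneous_monomial _ b c rfl
  intro t
  rcases le_or_gt (b y) t with hle | hlt
  · obtain ⟨f, hf, hfd, hfc⟩ := hh (t - b y)
    refine ⟨monomial b c * f, I.mul_mem_left _ hf, ?_, ?_⟩
    · have hbd : degreeOf y (monomial b c) ≤ b y := degreeOf_le_iff.2 fun m hm => by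
        rw [Finset.mem_singleton.1 (support_monomial_subset hm)]
      calc degreeOf y (monomial b c * f) ≤ degreeOf y (monomial b c) + degreeOf y f :=
            degreeOf_mul_le y _ _
        _ ≤ b y + (t - b y) := add_le_add hbd hfd
        _ = t := by omega
    · rw [weightedHomogeneousComponent_mul_of_le hb hle,
        weightedHomogeneousComponent_mul_of_le hb hle, hfc]
  · exact ⟨0, I.zero_mem, by simp, by rw [weightedHomogeneousComponent_mul_of_lt hb hlt, map_zero]⟩

theorem ComponentsLift.mul_left (hh : ComponentsLift y I h) (a : MvPolynomial σ R) :
    ComponentsLift y I (a * h) := by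
  induction a using MvPolynomial.induction_on' with
  | monomial b c => exact hh.monomial_mul b c
  | add p q hp hq => rw [add_mul]; exact hp.add hq

theorem componentsLift_inY (hf : f ∈ I) : ComponentsLift y I (inY y f) := by
  intro t
  have hin := isWeightedHomogeneous_inY y f
  rcases eq_or_ne t (degreeOf y f) with rfl | hne
  · exact ⟨f, hf, le_rfl, by
      rw [hin.weightedHomogeneousComponent_same, inY_eq_weightedHomogeneousComponent]⟩
  · exact ⟨0, I.zero_mem, by simp, by rw [map_zero, hin.weightedHomogeneousComponent_ne t hne]⟩

theorem componentsLift_of_mem_inYIdeal (hh : h ∈ inYIdeal y I) : ComponentsLift y I h := by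
  induction hh using Submodule.span_induction with
  | mem g hg =>
    obtain ⟨f, hf, rfl⟩ := hg
    exact componentsLift_inY hf
  | zero => exact componentsLift_zero
  | add _ _ _ _ hg hh => exact hg.add hh
  | smul a _ _ hh => exact hh.mul_left a

end CommSemiring

section CommRing

variable [CommRing R] {f q : MvPolynomial σ R} {t : ℕ} {I : Ideal (MvPolynomial σ R)}

theorem degreeOf_sub_weightedHomogeneousComponent_le (hf : degreeOf y f ≤ t + 1) :
    degreeOf y (f - weightedHomogeneousComponent (Pi.single y 1) (t + 1) f) ≤ t := by
  refine Nat.le_of_lt_succ (degreeOf_sub_lt t.succ_pos (fun m hm hle => ?_) fun m hm _ => ?_)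
  · have := (monomial_le_degreeOf y hm).trans hf
    rw [coeff_weightedHomogeneousComponent, weight_single_one_apply, if_pos (by omega)]
  · rw [coeff_weightedHomogeneousComponent, if_pos]
    by_contra hne
    rw [mem_support_iff, coeff_weightedHomogeneousComponent, if_neg hne] at hm
    exact hm rfl

theorem exists_noVar_add_mem_of_X_mul_mem_inYIdeal (hq : NoVar y q)
    (h : X y * q ∈ inYIdeal y I) : ∃ r, NoVar y r ∧ X y * q + r ∈ I := by
  obtain ⟨f, hf, hfd, hfc⟩ := componentsLift_of_mem_inYIdeal h 1
  have hXq : IsWeightedHomogeneous (Pi.single y 1) (X y * q) 1 := by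
    simpa using (isWeightedHomogeneous_X R (Pi.single y 1) y).mul hq.isWeightedHomogeneous
  rw [hXq.weightedHomogeneousComponent_same] at hfc
  refine ⟨f - X y * q, ?_, by rwa [add_sub_cancel]⟩
  rw [noVar_iff_degreeOf_eq_zero, ← Nat.le_zero, ← hfc]
  exact degreeOf_sub_weightedHomogeneousComponent_le hfd

end CommRing

section Field

variable {κ : Type*} [Field κ] {I : Ideal (MvPolynomial σ κ)} {i q u s : MvPolynomial σ κ}
  {d : ℕ}

theorem X_mul_mem_inYIdeal_of_mem_Cyd (hI : inYIdeal y I = Cyd y I ⊓ (Nyd y I + Ideal.span {X y}))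
    (hq : q ∈ Cyd y I) : X y * q ∈ inYIdeal y I := by
  rw [hI]
  exact ⟨(Cyd y I).mul_mem_left _ hq,
    Submodule.mem_sup_right (Ideal.mem_span_singleton.2 (dvd_mul_right _ _))⟩

theorem exists_degreeOf_sub_le
    (hI : inYIdeal y I = Cyd y I ⊓ (Nyd y I + Ideal.span {X y}))
    (hi : i ∈ I) (hd : degreeOf y i = d + 1) :
    ∃ q, NoVar y q ∧ q ∈ Cyd y I ∧ ∃ r, NoVar y r ∧ X y * q + r ∈ I ∧
      degreeOf y (i - X y ^ d * (X y * q + r)) ≤ d := by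
  obtain ⟨q, hq, hiq⟩ := (isWeightedHomogeneous_inY y i).exists_noVar_eq_X_pow_mul
  rw [hd] at hiq
  have hqC : q ∈ Cyd y I := ⟨d + 1, hiq ▸ Ideal.subset_span ⟨i, hi, rfl⟩⟩
  obtain ⟨r, hr, hf⟩ :=
    exists_noVar_add_mem_of_X_mul_mem_inYIdeal hq (X_mul_mem_inYIdeal_of_mem_Cyd hI hqC)
  refine ⟨q, hq, hqC, r, hr, hf, ?_⟩
  have hsplit : i - X y ^ d * (X y * q + r) = (i - inY y i) - X y ^ d * r := by
    rw [hiq]; ring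
  rw [hsplit]
  refine (degreeOf_sub_le y _ _).trans (max_le ?_ ?_)
  · rw [inY_eq_weightedHomogeneousComponent, hd]
    exact degreeOf_sub_weightedHomogeneousComponent_le hd.le
  · calc degreeOf y (X y ^ d * r) ≤ d + 0 := (degreeOf_mul_le y _ _).trans
          (add_le_add (degreeOf_X_self_pow y d).le (noVar_iff_degreeOf_eq_zero.1 hr).le)
      _ = d := rfl

theorem exists_mem_Cyd_mem_Nyd_mul_eq
    (hI : inYIdeal y I = Cyd y I ⊓ (Nyd y I + Ideal.span {X y}))
    (hu : NoVar y u) (hs : NoVar y s) (hv : X y * u + s ∈ I) (hi : i ∈ I) :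
    ∃ c ∈ Cyd y I, ∃ m ∈ Nyd y I, i * u = (X y * u + s) * c + m := by
  induction hd : degreeOf y i using Nat.strong_induction_on generalizing i with
  | _ d ih =>
    cases d with
    | zero =>
      exact ⟨0, zero_mem _, i * u, (Nyd y I).mul_mem_right u
        (mem_Nyd_of_noVar hi (noVar_iff_degreeOf_eq_zero.2 hd)), by ring⟩
    | succ d =>
      obtain ⟨q, hq, hqC, r, hr, hf, hdeg⟩ := exists_degreeOf_sub_le hI hi hd
      obtain ⟨c, hc, m, hm, heq⟩ :=
        ih _ (Nat.lt_succ_of_le hdeg) (I.sub_mem hi (I.mul_mem_left _ hf)) rfl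
      have hm₀ : r * u - s * q ∈ Nyd y I := by
        refine mem_Nyd_of_noVar ?_ ((hr.mul hu).sub (hs.mul hq))
        convert I.sub_mem (I.mul_mem_right u hf) (I.mul_mem_right q hv) using 1
        ring
      refine ⟨c + X y ^ d * q, add_mem hc ((Cyd y I).mul_mem_left _ hqC),
        m + X y ^ d * (r * u - s * q), add_mem hm ((Nyd y I).mul_mem_left _ hm₀), ?_⟩
      linear_combination heq

end Field

end MvPolynomial

theorem gvd_part5_general {κ : Type*} [Field κ]
    {n : ℕ} (I : Ideal (MvPolynomial (Fin (n + 1)) κ))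
    (hgvd : IsNondegGVD (Fin.last n) I)
    (u s : MvPolynomial (Fin (n + 1)) κ)
    (hu : NoVar (Fin.last n) u) (hs : NoVar (Fin.last n) s)
    (hvI : X (Fin.last n) * u + s ∈ I) :
    ∀ i ∈ I, ∃ c ∈ Cyd (Fin.last n) I, ∃ m ∈ Nyd (Fin.last n) I,
      i * u = (X (Fin.last n) * u + s) * c + m :=
  fun _ hi => exists_mem_Cyd_mem_Nyd_mul_eq hgvd.1.1 hu hs hvI hi

/-- Part (5): if `u ∈ C(x_n,I)` and `s` have no term divisible by `x_n` and
`v := x_n·u + s ∈ I`, then for every `i ∈ I` there are `c ∈ C(x_n,I)` and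
`m ∈ N(x_n,I)` with `i·u = v·c + m`. -/
theorem gvd_part5 {p : ℕ} [Fact p.Prime] {κ : Type*} [Field κ] [CharP κ p] [PerfectRing κ p]
    {n : ℕ} (I : Ideal (MvPolynomial (Fin (n + 1)) κ))
    (hgvd : IsNondegGVD (Fin.last n) I)
    (hemb : NoEmbeddedPrimes (Nyd (Fin.last n) I))
    (u s : MvPolynomial (Fin (n + 1)) κ)
    (huC : u ∈ Cyd (Fin.last n) I)
    (hu : NoVar (Fin.last n) u) (hs : NoVar (Fin.last n) s)
    (hvI : X (Fin.last n) * u + s ∈ I) :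
    ∀ i ∈ I, ∃ c ∈ Cyd (Fin.last n) I, ∃ m ∈ Nyd (Fin.last n) I,
      i * u = (X (Fin.last n) * u + s) * c + m :=
  gvd_part5_general I hgvd u s hu hs hvI
end

section
/- Let g, u, s ∈ S each have no term divisible by x_n and let N be an ideal of S generated by polynomials in which the variable x_n does not appear. If Tr((x_n·g)^{p−1}•) compatibly splits N, then Tr(g^{p−1}·(x_n·u + s)^{p−1}·m) ∈ N for every m ∈ N. -/
open MvPolynomial

/-!
Write `y = x_n`. For `w` free of `y`, `Tr(y^k·w)` vanishes unless `k = p·q + (p - 1)`, in which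
case it equals `y^q·Tr(y^(p-1)·w)`. A multiple `g^(p-1)·h·f` of a generator `f` of `N` is a sum of
such terms with `w = g^(p-1)·w'·f`, and then `Tr(y^(p-1)·w) = Tr((y·g)^(p-1)·w'·f) ∈ N` by the
compatible splitting. Hence `Tr(g^(p-1)·h·m) ∈ N` for every `h` and every `m ∈ N`.
-/

lemma Nat.eq_mul_add_pred_iff {p x e : ℕ} (hp : 0 < p) :
    x = p * e + (p - 1) ↔ (x + 1) % p = 0 ∧ (x + 1) / p - 1 = e := by
  have hsucc : x = p * e + (p - 1) ↔ x + 1 = p * (e + 1) := by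
    rw [Nat.mul_add_one]; omega
  rw [hsucc]
  constructor
  · intro h
    rw [h, Nat.mul_mod_right, Nat.mul_div_cancel_left _ hp]
    simp
  · rintro ⟨hmod, hdiv⟩
    obtain ⟨q, hq⟩ := Nat.dvd_of_mod_eq_zero hmod
    rw [hq, Nat.mul_div_cancel_left _ hp] at hdiv
    have hq0 : q ≠ 0 := by rintro rfl; omega
    rw [hq, show q = e + 1 by omega]

section NoVar

variable {κ : Type*} [CommSemiring κ] {σ : Type*} {y : σ}

lemma NoVar.coeff_eq_zero {w : MvPolynomial σ κ} (hw : NoVar y w) {c : σ →₀ ℕ}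
    (hc : c y ≠ 0) : coeff c w = 0 :=
  notMem_support_iff.mp fun h => hc (hw c h)

lemma NoVar.mul_s9 {a b : MvPolynomial σ κ} (ha : NoVar y a) (hb : NoVar y b) : NoVar y (a * b) := by
  classical
  intro c hc
  obtain ⟨c₁, hc₁, c₂, hc₂, rfl⟩ := Finset.mem_add.mp (support_mul a b hc)
  rw [Finsupp.add_apply, ha c₁ hc₁, hb c₂ hc₂]

lemma noVar_monomial {b : σ →₀ ℕ} (hb : b y = 0) (e : κ) : NoVar y (monomial b e) := by
  intro c hc
  rwa [Finset.mem_singleton.mp (support_monomial_subset hc)]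

lemma noVar_one : NoVar y (1 : MvPolynomial σ κ) :=
  noVar_monomial rfl 1

lemma NoVar.pow {a : MvPolynomial σ κ} (ha : NoVar y a) (k : ℕ) : NoVar y (a ^ k) := by
  induction k with
  | zero => exact pow_zero a ▸ noVar_one
  | succ k ih => exact pow_succ a k ▸ ih.mul_s9 ha

end NoVar

section Trace

variable {κ : Type*} [CommSemiring κ] {σ : Type*} [Fintype σ] [DecidableEq σ] {p : ℕ}

/-- The coefficient of `x^d` in `Tr f` is the coefficient of `x^(p·d + (p-1))` in `f`
(exponents taken coordinatewise). -/
noncomputable def traceExponent (p : ℕ) (d : σ →₀ ℕ) : σ →₀ ℕ :=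
  Finsupp.equivFunOnFinite.symm fun i => p * d i + (p - 1)

omit [DecidableEq σ] in
@[simp]
lemma traceExponent_apply (d : σ →₀ ℕ) (i : σ) : traceExponent p d i = p * d i + (p - 1) := rfl

omit [DecidableEq σ] in
lemma eq_traceExponent_iff (hp : 0 < p) {b d : σ →₀ ℕ} :
    b = traceExponent p d ↔ (∀ i, (b i + 1) % p = 0) ∧
      Finsupp.equivFunOnFinite.symm (fun i => (b i + 1) / p - 1) = d := by
  simp only [Finsupp.ext_iff, traceExponent_apply, Nat.eq_mul_add_pred_iff hp, forall_and,
    Finsupp.coe_equivFunOnFinite_symm]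

lemma coeff_Tr (hp : 0 < p) (f : MvPolynomial σ κ) (d : σ →₀ ℕ) :
    coeff d (Tr κ p f) = coeff (traceExponent p d) f := by
  simp only [Tr, coeff_sum, apply_ite (coeff d), coeff_monomial, coeff_zero, ← ite_and,
    ← eq_traceExponent_iff hp]
  rw [Finset.sum_ite_eq', ite_eq_left_iff, eq_comm]
  exact notMem_support_iff.mp

lemma Tr_zero (hp : 0 < p) : Tr κ p (0 : MvPolynomial σ κ) = 0 := by
  ext d; rw [coeff_Tr hp, coeff_zero, coeff_zero]

lemma Tr_add (hp : 0 < p) (a b : MvPolynomial σ κ) : Tr κ p (a + b) = Tr κ p a + Tr κ p b := by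
  ext d; simp only [coeff_Tr hp, coeff_add]

lemma Tr_X_pow_mul (hp : 0 < p) (y : σ) (q : ℕ) (a : MvPolynomial σ κ) :
    Tr κ p (X y ^ (p * q) * a) = X y ^ q * Tr κ p a := by
  ext d
  have hle : p * q ≤ traceExponent p d y ↔ q ≤ d y := by
    rw [traceExponent_apply]
    constructor
    · intro h
      by_contra! hlt
      have := Nat.mul_le_mul_left p (show d y + 1 ≤ q by omega)
      rw [Nat.mul_add_one] at this
      omega
    · intro h
      have := Nat.mul_le_mul_left p h
      omega
  rw [coeff_Tr hp, X_pow_eq_monomial, X_pow_eq_monomial, coeff_monomial_mul', coeff_monomial_mul',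
    one_mul, one_mul, coeff_Tr hp]
  simp only [Finsupp.single_le_iff, hle]
  split_ifs with h
  · congr 1
    ext i
    rcases eq_or_ne i y with rfl | hi
    · have := Nat.mul_le_mul_left p h
      simp only [Finsupp.tsub_apply, traceExponent_apply, Finsupp.single_eq_same, Nat.mul_sub]
      omega
    · simp [hi]
  · rfl

lemma Tr_X_pow_mul_eq_zero (hp : 0 < p) {y : σ} {j : ℕ} (hj : (j + 1) % p ≠ 0)
    {w : MvPolynomial σ κ} (hw : NoVar y w) : Tr κ p (X y ^ j * w) = 0 := by
  ext d
  rw [coeff_Tr hp, X_pow_eq_monomial, coeff_monomial_mul', coeff_zero]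
  simp only [Finsupp.single_le_iff]
  split_ifs with h
  · have hne : traceExponent p d y ≠ j := fun he =>
      hj (he ▸ ((Nat.eq_mul_add_pred_iff hp).mp rfl).1)
    have hc : (traceExponent p d - Finsupp.single y j) y ≠ 0 := by
      rw [Finsupp.tsub_apply, Finsupp.single_eq_same]
      omega
    rw [hw.coeff_eq_zero hc, mul_zero]
  · rfl

lemma Tr_X_pow_mul_mem (hp : 0 < p) {I : Ideal (MvPolynomial σ κ)} {y : σ}
    {w : MvPolynomial σ κ} (hw : NoVar y w) (hI : Tr κ p (X y ^ (p - 1) * w) ∈ I) (k : ℕ) :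
    Tr κ p (X y ^ k * w) ∈ I := by
  by_cases hk : (k + 1) % p = 0
  · obtain ⟨q, rfl⟩ : ∃ q, k = p * q + (p - 1) :=
      ⟨(k + 1) / p - 1, (Nat.eq_mul_add_pred_iff hp).mpr ⟨hk, rfl⟩⟩
    rw [pow_add, mul_assoc, Tr_X_pow_mul hp]
    exact I.mul_mem_left _ hI
  · rw [Tr_X_pow_mul_eq_zero hp hk hw]
    exact I.zero_mem

lemma Tr_mul_mem_of_noVar (hp : 0 < p) {I : Ideal (MvPolynomial σ κ)} {y : σ}
    {g f : MvPolynomial σ κ} (hg : NoVar y g) (hf : NoVar y f) (hfI : f ∈ I)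
    (hI : CompatiblySplits (fun a => Tr κ p ((X y * g) ^ (p - 1) * a)) I)
    (h : MvPolynomial σ κ) : Tr κ p (g ^ (p - 1) * h * f) ∈ I := by
  induction h using MvPolynomial.induction_on' with
  | monomial b e =>
    set w := g ^ (p - 1) * monomial (b.erase y) e * f
    have hw : NoVar y w := ((hg.pow _).mul_s9 (noVar_monomial (Finsupp.erase_same) e)).mul_s9 hf
    have hsplit : g ^ (p - 1) * monomial b e * f = X y ^ b y * w := by
      rw [← Finsupp.single_add_erase y b, ← one_mul e, ← monomial_mul, ← X_pow_eq_monomial,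
        Finsupp.single_add_erase]
      ring
    refine hsplit ▸ Tr_X_pow_mul_mem hp hw ?_ _
    have hw' : X y ^ (p - 1) * w = (X y * g) ^ (p - 1) * (monomial (b.erase y) e * f) := by ring
    exact hw' ▸ hI _ (I.mul_mem_left _ hfI)
  | add a b ha hb =>
    rw [mul_add, add_mul, Tr_add hp]
    exact I.add_mem ha hb

lemma Tr_mul_mem_span_of_noVar (hp : 0 < p) {G : Set (MvPolynomial σ κ)} {y : σ}
    {g : MvPolynomial σ κ} (hg : NoVar y g) (hG : ∀ f ∈ G, NoVar y f)
    (hI : CompatiblySplits (fun a => Tr κ p ((X y * g) ^ (p - 1) * a)) (Ideal.span G))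
    {m : MvPolynomial σ κ} (hm : m ∈ Ideal.span G) (h : MvPolynomial σ κ) :
    Tr κ p (g ^ (p - 1) * h * m) ∈ Ideal.span G := by
  induction hm using Submodule.span_induction generalizing h with
  | mem f hf => exact Tr_mul_mem_of_noVar hp hg (hG f hf) (Ideal.subset_span hf) hI h
  | zero =>
    rw [mul_zero, Tr_zero hp]
    exact zero_mem _
  | add a b _ _ ha hb =>
    rw [mul_add, Tr_add hp]
    exact add_mem (ha h) (hb h)
  | smul c a _ ha =>
    convert ha (h * c) using 2
    rw [smul_eq_mul]
    ring

end Trace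

theorem trace_deletion_claim_general {p : ℕ} [Fact p.Prime] {κ : Type*} [Field κ]
    {n : ℕ} (g u s : MvPolynomial (Fin (n + 1)) κ)
    (hg : NoVar (Fin.last n) g)
    (N : Ideal (MvPolynomial (Fin (n + 1)) κ))
    (hNgen : ∃ G : Set (MvPolynomial (Fin (n + 1)) κ),
      (∀ h ∈ G, NoVar (Fin.last n) h) ∧ N = Ideal.span G)
    (hN : CompatiblySplits (fun a => Tr κ p ((X (Fin.last n) * g) ^ (p - 1) * a)) N) :
    ∀ m ∈ N,
      Tr κ p (g ^ (p - 1) * (X (Fin.last n) * u + s) ^ (p - 1) * m) ∈ N := by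
  obtain ⟨G, hG, rfl⟩ := hNgen
  intro m hm
  exact Tr_mul_mem_span_of_noVar (Fact.out : p.Prime).pos hg hG hN hm _

/-- If `g`, `u`, `s` have no term divisible by `x_n`, `N` is generated by polynomials not
involving `x_n`, and `Tr((x_n·g)^{p−1}•)` compatibly splits `N`, then
`Tr(g^{p−1}·(x_n·u + s)^{p−1}·m) ∈ N` for every `m ∈ N`. -/
theorem trace_deletion_claim {p : ℕ} [Fact p.Prime] {κ : Type*} [Field κ] [CharP κ p]
    [PerfectRing κ p]
    {n : ℕ} (g u s : MvPolynomial (Fin (n + 1)) κ)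
    (hg : NoVar (Fin.last n) g) (hu : NoVar (Fin.last n) u) (hs : NoVar (Fin.last n) s)
    (N : Ideal (MvPolynomial (Fin (n + 1)) κ))
    (hNgen : ∃ G : Set (MvPolynomial (Fin (n + 1)) κ),
      (∀ h ∈ G, NoVar (Fin.last n) h) ∧ N = Ideal.span G)
    (hN : CompatiblySplits (fun a => Tr κ p ((X (Fin.last n) * g) ^ (p - 1) * a)) N) :
    ∀ m ∈ N,
      Tr κ p (g ^ (p - 1) * (X (Fin.last n) * u + s) ^ (p - 1) * m) ∈ N :=
  trace_deletion_claim_general g u s hg N hNgen hN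
end
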